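/- arXiv:2405.14860 — 3 statements merged into one kernel-verified Lean document; each statement's English description precedes it below -/
import Mathlib

section
/- Let V = {v_1,...,v_{n_1}} and U = {u_1,...,u_{n_2}} be two disjoint families of unit vectors in R^d such that every pair of vectors from V ∪ U is δ-orthogonal, with n_1, n_2 ≤ d_max and δ·d_max < 1. Then for any unit vectors y₁ ∈ span(V) and y₂ ∈ span(U), |y₁ · y₂| ≤ δ·d_max / (1 - δ·d_max). -/
open scoped BigOperators RealInnerProductSpace

private lemma l1_bound {d n dmax : ℕ} {δ : ℝ} (hδ : 0 ≤ δ) (hn : n ≤ dmax)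
    (hsmall : δ * (dmax : ℝ) < 1)
    (w : Fin n → EuclideanSpace ℝ (Fin d)) (hunit : ∀ i, ‖w i‖ = 1)
    (hww : ∀ i j, i ≠ j → |⟪w i, w j⟫| ≤ δ)
    (z : Fin n → ℝ) (hz : ‖∑ i, z i • w i‖ = 1) :
    (∑ i, |z i|) ^ 2 ≤ (dmax : ℝ) / (1 - δ * dmax) := by
  set S₁ := ∑ i, |z i| with hS₁
  set S₂ := ∑ i, (z i) ^ 2 with hS₂
  have hS₂nn : 0 ≤ S₂ := Finset.sum_nonneg fun i _ => sq_nonneg _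
  have hCS : S₁ ^ 2 ≤ (n : ℝ) * S₂ := by
    have := sq_sum_le_card_mul_sum_sq (s := Finset.univ) (f := fun i => |z i|)
    simpa [sq_abs] using this
  -- expand the norm
  have hexp : (1 : ℝ) = ∑ i, ∑ j, z i * z j * ⟪w i, w j⟫ := by
    have h1 : (1 : ℝ) = ⟪∑ i, z i • w i, ∑ j, z j • w j⟫ := by
      rw [real_inner_self_eq_norm_sq, hz]; norm_num
    rw [h1, sum_inner]
    simp [inner_sum, sum_inner, real_inner_smul_left, real_inner_smul_right,
      Finset.mul_sum, mul_comm, mul_assoc, mul_left_comm]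
  have hlow : S₂ - δ * S₁ ^ 2 ≤ 1 := by
    have key : ∑ i, ∑ j, (-(δ * |z i| * |z j|) +
        (if i = j then z i ^ 2 + δ * |z i| * |z j| else 0)) ≤
        ∑ i, ∑ j, z i * z j * ⟪w i, w j⟫ := by
      refine Finset.sum_le_sum fun i _ => Finset.sum_le_sum fun j _ => ?_
      by_cases hij : i = j
      · subst hij
        have : ⟪w i, w i⟫ = 1 := by
          rw [real_inner_self_eq_norm_sq, hunit]; norm_num
        simp [this, sq, hunit]
      · simp only [if_neg hij]
        have h1 : |z i * z j * ⟪w i, w j⟫| ≤ δ * |z i| * |z j| := by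
          rw [abs_mul, abs_mul]
          calc |z i| * |z j| * |⟪w i, w j⟫| ≤ |z i| * |z j| * δ := by
                exact mul_le_mul_of_nonneg_left (hww i j hij) (by positivity)
            _ = δ * |z i| * |z j| := by ring
        have := neg_abs_le (z i * z j * ⟪w i, w j⟫)
        linarith
    have hval : ∑ i, ∑ j, (-(δ * |z i| * |z j|) +
        (if i = j then z i ^ 2 + δ * |z i| * |z j| else 0)) =
        -(δ * S₁ ^ 2) + (S₂ + δ * S₂) := by
      have : ∀ i : Fin n, ∑ j, (-(δ * |z i| * |z j|) +
          (if i = j then z i ^ 2 + δ * |z i| * |z j| else 0)) =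
          -(δ * |z i| * S₁) + (z i ^ 2 + δ * z i ^ 2) := by
        intro i
        rw [Finset.sum_add_distrib]
        have h2 : ∑ j, (if i = j then z i ^ 2 + δ * |z i| * |z j| else 0) =
            z i ^ 2 + δ * z i ^ 2 := by
          rw [Finset.sum_ite_eq]
          simp [sq_abs, sq, mul_assoc]
        rw [h2]
        congr 1
        rw [Finset.sum_neg_distrib, ← Finset.mul_sum]
      rw [Finset.sum_congr rfl fun i _ => this i]
      rw [Finset.sum_add_distrib]
      have h3 : ∑ i, -(δ * |z i| * S₁) = -(δ * S₁ ^ 2) := by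
        rw [Finset.sum_neg_distrib, ← Finset.sum_mul, ← Finset.mul_sum, ← hS₁]
        ring
      have h4 : ∑ i, (z i ^ 2 + δ * z i ^ 2) = S₂ + δ * S₂ := by
        rw [Finset.sum_add_distrib, ← Finset.mul_sum, ← hS₂]
      rw [h3, h4]
    rw [hval] at key
    rw [← hexp] at key
    nlinarith [mul_nonneg hδ hS₂nn]
  -- combine
  have hpos : (0 : ℝ) < 1 - δ * dmax := by linarith
  rw [le_div_iff₀ hpos]
  have hnd : (n : ℝ) ≤ (dmax : ℝ) := Nat.cast_le.mpr hn
  have h2 : S₁ ^ 2 ≤ (dmax : ℝ) * S₂ := le_trans hCS (by nlinarith)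
  nlinarith [sq_nonneg S₁, mul_nonneg hδ (sq_nonneg S₁)]

/-- Unit vectors in the spans of two δ-orthogonal families of unit vectors have inner
product at most δ·d_max / (1 - δ·d_max). -/
theorem stmt_4 (d n₁ n₂ dmax : ℕ) (δ : ℝ)
    (v : Fin n₁ → EuclideanSpace ℝ (Fin d)) (u : Fin n₂ → EuclideanSpace ℝ (Fin d))
    (hdisjoint : ∀ i j, v i ≠ u j)
    (hvunit : ∀ i, ‖v i‖ = 1) (huunit : ∀ j, ‖u j‖ = 1)
    (hvv : ∀ i j, i ≠ j → |⟪v i, v j⟫| ≤ δ)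
    (huu : ∀ i j, i ≠ j → |⟪u i, u j⟫| ≤ δ)
    (hvu : ∀ i j, |⟪v i, u j⟫| ≤ δ)
    (hn₁ : n₁ ≤ dmax) (hn₂ : n₂ ≤ dmax)
    (hsmall : δ * (dmax : ℝ) < 1)
    (y₁ y₂ : EuclideanSpace ℝ (Fin d))
    (hy₁ : y₁ ∈ Submodule.span ℝ (Set.range v))
    (hy₂ : y₂ ∈ Submodule.span ℝ (Set.range u))
    (hny₁ : ‖y₁‖ = 1) (hny₂ : ‖y₂‖ = 1) :
    |⟪y₁, y₂⟫| ≤ δ * (dmax : ℝ) / (1 - δ * (dmax : ℝ)) := by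
  -- n₁, n₂ positive
  rcases Nat.eq_zero_or_pos n₁ with h0 | hpos₁
  · subst h0
    rw [show Set.range v = ∅ by simp [Set.range_eq_empty]] at hy₁
    simp [Submodule.span_empty] at hy₁
    rw [hy₁] at hny₁; simp at hny₁
  rcases Nat.eq_zero_or_pos n₂ with h0 | hpos₂
  · subst h0
    rw [show Set.range u = ∅ by simp [Set.range_eq_empty]] at hy₂
    simp [Submodule.span_empty] at hy₂
    rw [hy₂] at hny₂; simp at hny₂
  have hδ : 0 ≤ δ := le_trans (abs_nonneg _) (hvu ⟨0, hpos₁⟩ ⟨0, hpos₂⟩)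
  obtain ⟨z₁, hz₁⟩ := (Submodule.mem_span_range_iff_exists_fun ℝ).mp hy₁
  obtain ⟨z₂, hz₂⟩ := (Submodule.mem_span_range_iff_exists_fun ℝ).mp hy₂
  have hb₁ := l1_bound hδ hn₁ hsmall v hvunit hvv z₁ (by rw [hz₁]; exact hny₁)
  have hb₂ := l1_bound hδ hn₂ hsmall u huunit huu z₂ (by rw [hz₂]; exact hny₂)
  set S₁ := ∑ i, |z₁ i|
  set T₁ := ∑ j, |z₂ j|
  have hS₁nn : 0 ≤ S₁ := Finset.sum_nonneg fun i _ => abs_nonneg _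
  have hT₁nn : 0 ≤ T₁ := Finset.sum_nonneg fun i _ => abs_nonneg _
  have hbound : |⟪y₁, y₂⟫| ≤ δ * (S₁ * T₁) := by
    rw [← hz₁, ← hz₂]
    have hexp : ⟪∑ i, z₁ i • v i, ∑ j, z₂ j • u j⟫ =
        ∑ i, ∑ j, z₁ i * z₂ j * ⟪v i, u j⟫ := by
      rw [sum_inner]
      refine Finset.sum_congr rfl fun i _ => ?_
      rw [real_inner_smul_left, inner_sum, Finset.mul_sum]
      refine Finset.sum_congr rfl fun j _ => ?_
      rw [real_inner_smul_right]; ring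
    rw [hexp]
    calc |∑ i, ∑ j, z₁ i * z₂ j * ⟪v i, u j⟫|
        ≤ ∑ i, ∑ j, |z₁ i * z₂ j * ⟪v i, u j⟫| := by
          refine le_trans (Finset.abs_sum_le_sum_abs _ _) ?_
          exact Finset.sum_le_sum fun i _ => Finset.abs_sum_le_sum_abs _ _
      _ ≤ ∑ i, ∑ j, |z₁ i| * |z₂ j| * δ := by
          refine Finset.sum_le_sum fun i _ => Finset.sum_le_sum fun j _ => ?_
          rw [abs_mul, abs_mul]
          exact mul_le_mul_of_nonneg_left (hvu i j) (by positivity)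
      _ = δ * (S₁ * T₁) := by
          have h5 : ∀ i, ∑ j, |z₁ i| * |z₂ j| * δ = |z₁ i| * T₁ * δ := fun i => by
            rw [← Finset.sum_mul, ← Finset.mul_sum]
          rw [Finset.sum_congr rfl fun i _ => h5 i, ← Finset.sum_mul, ← Finset.sum_mul]
          ring
  have hpos : (0 : ℝ) < 1 - δ * dmax := by linarith
  have hC : (0:ℝ) ≤ (dmax : ℝ) / (1 - δ * dmax) := by positivity
  have hST : S₁ * T₁ ≤ (dmax : ℝ) / (1 - δ * dmax) := by
    nlinarith [sq_nonneg (S₁ - T₁)]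
  calc |⟪y₁, y₂⟫| ≤ δ * (S₁ * T₁) := hbound
    _ ≤ δ * ((dmax : ℝ) / (1 - δ * dmax)) := by
        exact mul_le_mul_of_nonneg_left hST hδ
    _ = δ * (dmax : ℝ) / (1 - δ * (dmax : ℝ)) := by ring
end

section
/- Suppose it is possible to choose N pairwise δ-orthogonal vectors in any Euclidean space of a given dimension, in the sense that there exist N unit vectors with pairwise absolute inner product at most δ. Given d_max ≥ 1, partition these N vectors into groups of size at most d_max to form ⌊N/d_max⌋ matrices whose columns are distinct vectors from the collection. Then any two distinct such matrices A_i, A_j are (δ·d_max/(1-δ·d_max))-orthogonal, meaning |x_i · x_j| ≤ δ·d_max/(1-δ·d_max) for all unit vectors x_i ∈ colspace(A_i), x_j ∈ colspace(A_j), provided δ·d_max < 1. -/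
open scoped BigOperators RealInnerProductSpace

lemma key_bound {d N dmax : ℕ} {δ : ℝ} (hδ : 0 ≤ δ) (hsmall : δ * (dmax : ℝ) < 1)
    (v : Fin N → EuclideanSpace ℝ (Fin d))
    (hunit : ∀ i, ‖v i‖ = 1)
    (horth : ∀ i j, i ≠ j → |⟪v i, v j⟫| ≤ δ)
    (s : Finset (Fin N)) (hcard : s.card ≤ dmax)
    (a : Fin N → ℝ) (x : EuclideanSpace ℝ (Fin d))
    (hx : x = ∑ k ∈ s, a k • v k) (hnx : ‖x‖ = 1) :
    (∑ k ∈ s, |a k|) ^ 2 ≤ (dmax : ℝ) / (1 - δ * (dmax : ℝ)) := by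
  set S := ∑ k ∈ s, |a k| with hS
  have hpos : (0:ℝ) < 1 - δ * dmax := by linarith
  have h1 : (1:ℝ) = ∑ k ∈ s, ∑ l ∈ s, a k * a l * ⟪v k, v l⟫ := by
    have : ⟪x, x⟫ = ‖x‖ ^ 2 := real_inner_self_eq_norm_sq x
    rw [hnx] at this
    rw [hx] at this
    rw [sum_inner] at this
    simp only [inner_sum, real_inner_smul_left, real_inner_smul_right] at this
    rw [one_pow] at this
    rw [← this]
    exact Finset.sum_congr rfl fun k _ => Finset.sum_congr rfl fun l _ => by ring
  -- split into diagonal and off-diagonal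
  have hsplit : ∑ k ∈ s, ∑ l ∈ s, a k * a l * ⟪v k, v l⟫
      = (∑ k ∈ s, (a k)^2) + ∑ k ∈ s, ∑ l ∈ s.erase k, a k * a l * ⟪v k, v l⟫ := by
    rw [← Finset.sum_add_distrib]
    refine Finset.sum_congr rfl fun k hk => ?_
    rw [← Finset.add_sum_erase _ _ hk]
    congr 1
    have : ⟪v k, v k⟫ = 1 := by
      rw [real_inner_self_eq_norm_sq, hunit k]; norm_num
    rw [this]; ring
  have hR : |∑ k ∈ s, ∑ l ∈ s.erase k, a k * a l * ⟪v k, v l⟫| ≤ δ * S ^ 2 := by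
    calc |∑ k ∈ s, ∑ l ∈ s.erase k, a k * a l * ⟪v k, v l⟫|
        ≤ ∑ k ∈ s, |∑ l ∈ s.erase k, a k * a l * ⟪v k, v l⟫| := Finset.abs_sum_le_sum_abs _ _
      _ ≤ ∑ k ∈ s, ∑ l ∈ s.erase k, |a k * a l * ⟪v k, v l⟫| :=
          Finset.sum_le_sum fun k _ => Finset.abs_sum_le_sum_abs _ _
      _ ≤ ∑ k ∈ s, ∑ l ∈ s.erase k, |a k| * |a l| * δ := by
          refine Finset.sum_le_sum fun k _ => Finset.sum_le_sum fun l hl => ?_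
          rw [abs_mul, abs_mul]
          exact mul_le_mul_of_nonneg_left (horth k l (Finset.ne_of_mem_erase hl).symm)
            (by positivity)
      _ ≤ ∑ k ∈ s, ∑ l ∈ s, |a k| * |a l| * δ := by
          refine Finset.sum_le_sum fun k hk => ?_
          exact Finset.sum_le_sum_of_subset_of_nonneg (Finset.erase_subset _ _)
            (fun _ _ _ => by positivity)
      _ = δ * S ^ 2 := by
          rw [hS, sq, Finset.sum_mul_sum, Finset.mul_sum]
          refine Finset.sum_congr rfl fun k _ => ?_
          rw [Finset.mul_sum]
          exact Finset.sum_congr rfl fun l _ => by ring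
  have hq : ∑ k ∈ s, (a k)^2 ≤ 1 + δ * S ^ 2 := by
    have := hsplit ▸ h1
    have habs := abs_le.mp hR
    linarith
  have hcs : S ^ 2 ≤ (s.card : ℝ) * ∑ k ∈ s, (a k)^2 := by
    have := sq_sum_le_card_mul_sum_sq (s := s) (f := fun k => |a k|)
    simpa [sq_abs] using this
  have hSd : S ^ 2 ≤ (dmax : ℝ) * (1 + δ * S ^ 2) := by
    calc S ^ 2 ≤ (s.card : ℝ) * ∑ k ∈ s, (a k)^2 := hcs
      _ ≤ (dmax : ℝ) * (1 + δ * S ^ 2) := by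
          apply mul_le_mul (by exact_mod_cast hcard) hq
          · positivity
          · positivity
  rw [le_div_iff₀ hpos]
  nlinarith [hSd]

/-- Partitioning N pairwise δ-orthogonal unit vectors into ⌊N/d_max⌋ groups of size at
most d_max yields matrices (with those vectors as columns) that are pairwise
(δ·d_max/(1-δ·d_max))-orthogonal: unit vectors in the column spans of distinct groups
have inner product at most δ·d_max/(1-δ·d_max). -/
theorem stmt_6 (d N dmax m : ℕ) (hdmax : 1 ≤ dmax) (δ : ℝ)
    (hsmall : δ * (dmax : ℝ) < 1)
    (v : Fin N → EuclideanSpace ℝ (Fin d))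
    (hunit : ∀ i, ‖v i‖ = 1)
    (horth : ∀ i j, i ≠ j → |⟪v i, v j⟫| ≤ δ)
    (hm : m = N / dmax)
    (g : Fin m → Finset (Fin N))
    (hdisj : ∀ i j, i ≠ j → Disjoint (g i) (g j))
    (hcard : ∀ i, (g i).card ≤ dmax)
    (i j : Fin m) (hij : i ≠ j)
    (x₁ x₂ : EuclideanSpace ℝ (Fin d))
    (hx₁ : x₁ ∈ Submodule.span ℝ (v '' (g i : Set (Fin N))))
    (hx₂ : x₂ ∈ Submodule.span ℝ (v '' (g j : Set (Fin N))))
    (hnx₁ : ‖x₁‖ = 1) (hnx₂ : ‖x₂‖ = 1) :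
    |⟪x₁, x₂⟫| ≤ δ * (dmax : ℝ) / (1 - δ * (dmax : ℝ)) := by
  -- extract coefficients
  rw [Finsupp.mem_span_image_iff_linearCombination] at hx₁ hx₂
  obtain ⟨l₁, hl₁s, hl₁⟩ := hx₁
  obtain ⟨l₂, hl₂s, hl₂⟩ := hx₂
  rw [Finsupp.mem_supported] at hl₁s hl₂s
  have hx1 : x₁ = ∑ k ∈ g i, l₁ k • v k := by
    rw [← hl₁, Finsupp.linearCombination_apply, Finsupp.sum]
    exact (Finset.sum_subset (fun k hk => hl₁s hk)
      (fun k _ hk => by rw [Finsupp.notMem_support_iff.mp hk, zero_smul]))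
  have hx2 : x₂ = ∑ k ∈ g j, l₂ k • v k := by
    rw [← hl₂, Finsupp.linearCombination_apply, Finsupp.sum]
    exact (Finset.sum_subset (fun k hk => hl₂s hk)
      (fun k _ hk => by rw [Finsupp.notMem_support_iff.mp hk, zero_smul]))
  -- nonemptiness and δ ≥ 0
  have hne1 : (g i).Nonempty := by
    rcases Finset.eq_empty_or_nonempty (g i) with h | h
    · exfalso
      rw [h] at hx1
      simp at hx1
      rw [hx1] at hnx₁; simp at hnx₁
    · exact h
  have hne2 : (g j).Nonempty := by
    rcases Finset.eq_empty_or_nonempty (g j) with h | h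
    · exfalso
      rw [h] at hx2
      simp at hx2
      rw [hx2] at hnx₂; simp at hnx₂
    · exact h
  obtain ⟨k₀, hk₀⟩ := hne1
  obtain ⟨l₀, hl₀⟩ := hne2
  have hkl : k₀ ≠ l₀ := fun h =>
    (Finset.disjoint_left.mp (hdisj i j hij) hk₀) (h ▸ hl₀)
  have hδ : 0 ≤ δ := le_trans (abs_nonneg _) (horth k₀ l₀ hkl)
  have hpos : (0:ℝ) < 1 - δ * dmax := by linarith
  -- ℓ¹ bounds
  have hB1 := key_bound hδ hsmall v hunit horth (g i) (hcard i) l₁ x₁ hx1 hnx₁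
  have hB2 := key_bound hδ hsmall v hunit horth (g j) (hcard j) l₂ x₂ hx2 hnx₂
  set S₁ := ∑ k ∈ g i, |l₁ k| with hS₁
  set S₂ := ∑ k ∈ g j, |l₂ k| with hS₂
  have hS₁0 : 0 ≤ S₁ := Finset.sum_nonneg fun _ _ => abs_nonneg _
  have hS₂0 : 0 ≤ S₂ := Finset.sum_nonneg fun _ _ => abs_nonneg _
  have hSS : S₁ * S₂ ≤ (dmax : ℝ) / (1 - δ * dmax) := by
    nlinarith [sq_nonneg (S₁ - S₂)]
  -- expand inner product
  have hinner : ⟪x₁, x₂⟫ = ∑ k ∈ g i, ∑ l ∈ g j, l₁ k * l₂ l * ⟪v k, v l⟫ := by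
    rw [hx1, hx2, sum_inner]
    refine Finset.sum_congr rfl fun k _ => ?_
    rw [inner_sum]
    refine Finset.sum_congr rfl fun l _ => ?_
    rw [real_inner_smul_left, real_inner_smul_right]; ring
  calc |⟪x₁, x₂⟫| = |∑ k ∈ g i, ∑ l ∈ g j, l₁ k * l₂ l * ⟪v k, v l⟫| := by rw [hinner]
    _ ≤ ∑ k ∈ g i, |∑ l ∈ g j, l₁ k * l₂ l * ⟪v k, v l⟫| := Finset.abs_sum_le_sum_abs _ _
    _ ≤ ∑ k ∈ g i, ∑ l ∈ g j, |l₁ k * l₂ l * ⟪v k, v l⟫| :=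
        Finset.sum_le_sum fun k _ => Finset.abs_sum_le_sum_abs _ _
    _ ≤ ∑ k ∈ g i, ∑ l ∈ g j, |l₁ k| * |l₂ l| * δ := by
        refine Finset.sum_le_sum fun k hk => Finset.sum_le_sum fun l hl => ?_
        rw [abs_mul, abs_mul]
        have hne : k ≠ l := fun h =>
          (Finset.disjoint_left.mp (hdisj i j hij) hk) (h ▸ hl)
        exact mul_le_mul_of_nonneg_left (horth k l hne) (by positivity)
    _ = δ * (S₁ * S₂) := by
        rw [hS₁, hS₂, Finset.sum_mul_sum, Finset.mul_sum]
        refine Finset.sum_congr rfl fun k _ => ?_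
        rw [Finset.mul_sum]
        exact Finset.sum_congr rfl fun l _ => by ring
    _ ≤ δ * ((dmax : ℝ) / (1 - δ * dmax)) := mul_le_mul_of_nonneg_left hSS hδ
    _ = δ * (dmax : ℝ) / (1 - δ * (dmax : ℝ)) := by ring
end

section
/- Let f be uniformly distributed on the unit circle in R². For any unit vector v ∈ R² and c ∈ R, the probability that |v·f + c| < ε·√(E[(v·f + c)²]) tends to 0 as ε → 0⁺. Hence the uniform circle distribution is not a mixture: M_ε(f) → 0 as ε → 0. -/
open MeasureTheory Filter

/-- The uniform probability measure on the unit circle in ℝ². -/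
noncomputable def circleUniform : Measure (ℝ × ℝ) :=
  Measure.map (fun θ : ℝ => (Real.cos θ, Real.sin θ))
    ((ENNReal.ofReal (2 * Real.pi))⁻¹ •
      (volume : Measure ℝ).restrict (Set.Ico 0 (2 * Real.pi)))

lemma circle_map_measurable : Measurable (fun θ : ℝ => (Real.cos θ, Real.sin θ)) :=
  (Real.continuous_cos.prodMk Real.continuous_sin).measurable

lemma circleUniform_finite : circleUniform Set.univ ≠ ⊤ := by
  rw [circleUniform, Measure.map_apply circle_map_measurable MeasurableSet.univ]
  simp only [Set.preimage_univ, Measure.smul_apply, Measure.restrict_apply MeasurableSet.univ,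
    Set.univ_inter, Real.volume_Ico, smul_eq_mul]
  refine ENNReal.mul_ne_top ?_ ENNReal.ofReal_ne_top
  simp [ENNReal.inv_ne_top, ENNReal.ofReal_eq_zero, not_le, Real.pi_pos, mul_pos]

/-- The key fact: the projection zero set has measure zero. -/
lemma circle_zero_set (v : ℝ × ℝ) (hv : v ≠ 0) (c : ℝ) :
    circleUniform {x : ℝ × ℝ | v.1 * x.1 + v.2 * x.2 + c = 0} = 0 := by
  have hms : MeasurableSet {x : ℝ × ℝ | v.1 * x.1 + v.2 * x.2 + c = 0} :=
    (isClosed_eq (by continuity) continuous_const).measurableSet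
  rw [circleUniform, Measure.map_apply circle_map_measurable hms]
  set Z : Set ℝ := (fun θ : ℝ => (Real.cos θ, Real.sin θ)) ⁻¹'
      {x : ℝ × ℝ | v.1 * x.1 + v.2 * x.2 + c = 0} with hZ
  have hvol : volume Z = 0 := by
    rcases Set.eq_empty_or_nonempty Z with h | ⟨θ₀, hθ₀⟩
    · simp [h]
    -- express v via polar coordinates
    set z : ℂ := ⟨v.1, v.2⟩ with hz
    have hz0 : z ≠ 0 := by
      simp only [hz, Ne, Complex.ext_iff, Complex.zero_re, Complex.zero_im, not_and]
      intro h1 h2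
      exact hv (Prod.ext h1 h2)
    set r : ℝ := ‖z‖ with hr
    have hr0 : r ≠ 0 := by simpa [hr] using hz0
    set φ : ℝ := Complex.arg z with hφ
    have hcos : r * Real.cos φ = v.1 := by
      rw [hφ, Complex.cos_arg hz0, hr]
      field_simp
      rfl
    have hsin : r * Real.sin φ = v.2 := by
      rw [hφ, Complex.sin_arg, hr]
      field_simp
      rfl
    have hform : ∀ θ, θ ∈ Z ↔ r * Real.cos (θ - φ) + c = 0 := by
      intro θ
      simp only [hZ, Set.mem_preimage, Set.mem_setOf_eq, Real.cos_sub]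
      constructor <;> intro h <;> [rw [← h]; rw [← h]] <;> ring_nf <;>
        rw [← hcos, ← hsin] <;> ring
    have hsub : Z ⊆ ⋃ k : ℤ, ({θ₀ - 2 * k * Real.pi} ∪
        {2 * k * Real.pi - θ₀ + 2 * φ} : Set ℝ) := by
      intro θ hθ
      have h1 : r * Real.cos (θ - φ) + c = 0 := (hform θ).1 hθ
      have h2 : r * Real.cos (θ₀ - φ) + c = 0 := (hform θ₀).1 hθ₀
      have hcc : Real.cos (θ - φ) = Real.cos (θ₀ - φ) := by
        have : r * Real.cos (θ - φ) = r * Real.cos (θ₀ - φ) := by linarith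
        exact mul_left_cancel₀ hr0 this
      rcases Real.cos_eq_cos_iff.1 hcc with ⟨k, hk | hk⟩
      · refine Set.mem_iUnion.2 ⟨k, Or.inl ?_⟩
        simp only [Set.mem_singleton_iff]
        linarith
      · refine Set.mem_iUnion.2 ⟨k, Or.inr ?_⟩
        simp only [Set.mem_singleton_iff]
        linarith
    refine measure_mono_null hsub ?_
    refine Set.Countable.measure_zero ?_ _
    exact Set.countable_iUnion fun k =>
      ((Set.countable_singleton _).union (Set.countable_singleton _))
  have : ((volume : Measure ℝ).restrict (Set.Ico 0 (2 * Real.pi))) Z = 0 :=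
    le_antisymm (hvol ▸ Measure.restrict_le_self Z) (zero_le)
  simp [Measure.smul_apply, this]

/-- For f uniform on the unit circle, any projection probability
P(|v·f + c| < ε·√(E[(v·f + c)²])) tends to 0 as ε → 0⁺: the circle is not a mixture. -/
theorem stmt_13 (v : ℝ × ℝ) (hv : ‖v‖ = 1) (c : ℝ) :
    Tendsto (fun ε : ℝ =>
        (circleUniform {x : ℝ × ℝ | |v.1 * x.1 + v.2 * x.2 + c| <
          ε * Real.sqrt (∫ x, (v.1 * x.1 + v.2 * x.2 + c) ^ 2 ∂circleUniform)}).toReal)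
      (nhdsWithin 0 (Set.Ioi 0)) (nhds 0) := by
  have hv0 : v ≠ 0 := by
    intro h; rw [h] at hv; simp at hv
  set s : ℝ := Real.sqrt (∫ x, (v.1 * x.1 + v.2 * x.2 + c) ^ 2 ∂circleUniform) with hs
  have hs0 : 0 ≤ s := Real.sqrt_nonneg _
  set A : ℝ → Set (ℝ × ℝ) := fun ε => {x : ℝ × ℝ | |v.1 * x.1 + v.2 * x.2 + c| < ε * s}
    with hA
  have hAm : ∀ ε, MeasurableSet (A ε) := fun ε =>
    (isOpen_lt (by continuity) continuous_const).measurableSet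
  have hmono : ∀ i j : ℝ, 0 < i → i ≤ j → A i ⊆ A j := by
    intro i j hi hij x hx
    exact lt_of_lt_of_le hx (mul_le_mul_of_nonneg_right hij hs0)
  have hfin : ∃ r > (0:ℝ), circleUniform (A r) ≠ ⊤ := by
    refine ⟨1, one_pos, ?_⟩
    exact fun h => circleUniform_finite (top_le_iff.1 (h ▸ measure_mono (Set.subset_univ _)))
  have key := tendsto_measure_biInter_gt (μ := circleUniform) (s := A) (a := 0)
    (fun r _ => (hAm r).nullMeasurableSet) hmono hfin
  have hinter : circleUniform (⋂ r > (0:ℝ), A r) = 0 := by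
    refine measure_mono_null ?_ (circle_zero_set v hv0 c)
    intro x hx
    simp only [Set.mem_iInter] at hx
    simp only [Set.mem_setOf_eq]
    by_contra hne
    have habs : 0 < |v.1 * x.1 + v.2 * x.2 + c| := abs_pos.2 hne
    set b := |v.1 * x.1 + v.2 * x.2 + c|
    have hε : (0:ℝ) < b / (s + 1) := div_pos habs (by linarith)
    have := hx (b / (s + 1)) hε
    have hlt : b / (s + 1) * s < b := by
      rw [div_mul_eq_mul_div, div_lt_iff₀ (by linarith)]
      nlinarith
    have h2 : b < b / (s + 1) * s := this
    linarith
  rw [hinter] at key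
  have := (ENNReal.tendsto_toReal (by simp)).comp key
  exact this
end
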